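/- arXiv:1807.00982 — 2 statements merged into one kernel-verified Lean document; each statement's English description precedes it below -/
import Mathlib

section
/- For any topological space X with basepoint x₀, the fundamental group π₁(X,x₀) equipped with the path Spanier topology (the subgroup topology determined by the neighbourhood family of all path Spanier subgroups) is a topological group. -/
open TopologicalSpace
open scoped Topology Pointwise

attribute [local instance] Path.Homotopic.setoid

/-- The collection of all left cosets `g • H` of members of a family of subgroups. -/
def leftCosets {G : Type*} [Group G] (Sig : Set (Subgroup G)) : Set (Set G) :=
  {s | ∃ g : G, ∃ H ∈ Sig, s = g • (H : Set G)}

/-- A neighbourhood family on a group `G`: a (nonempty) collection of subgroups such that any two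
members contain a common member. -/
def IsNbhdFamily {G : Type*} [Group G] (Sig : Set (Subgroup G)) : Prop :=
  Sig.Nonempty ∧ ∀ H ∈ Sig, ∀ K ∈ Sig, ∃ S ∈ Sig, S ≤ H ⊓ K

/-- The subgroup topology on `G` determined by the family `Sig`: the topology generated by all
left cosets of members of `Sig`. -/
def subgroupTopology {G : Type*} [Group G] (Sig : Set (Subgroup G)) : TopologicalSpace G :=
  generateFrom (leftCosets Sig)

variable {X : Type*} [TopologicalSpace X]

/-- The homotopy class of a loop, as an element of the fundamental group. -/
noncomputable def fgClass {x₀ : X} (γ : Path x₀ x₀) : FundamentalGroup X x₀ :=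
  FundamentalGroup.fromPath ⟦γ⟧

/-- An open cover of the space `X`. -/
def IsOpenCover (U : Set (Set X)) : Prop :=
  (∀ u ∈ U, IsOpen u) ∧ ⋃₀ U = Set.univ

/-- The Spanier subgroup `π(𝒰, x₀)` of the fundamental group determined by an open cover `𝒰`:
the subgroup generated by all classes `[α * β * α⁻¹]` with `α` a path starting at `x₀` and `β`
a loop at `α(1)` lying in some member of `𝒰`. -/
noncomputable def spanierSubgroup (U : Set (Set X)) (x₀ : X) :
    Subgroup (FundamentalGroup X x₀) :=
  Subgroup.closure
    {g | ∃ (x : X) (α : Path x₀ x) (β : Path x x) (u : Set X), u ∈ U ∧ Set.range β ⊆ u ∧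
      g = fgClass ((α.trans β).trans α.symm)}

/-- The collection of all Spanier subgroups of `π₁(X, x₀)`. -/
def spanierFamily (x₀ : X) : Set (Subgroup (FundamentalGroup X x₀)) :=
  {H | ∃ U : Set (Set X), IsOpenCover U ∧ H = spanierSubgroup U x₀}

/-- A path open cover of `(X, x₀)`: a family of open sets `V x α`, indexed by the paths `α` in
`X` from `x₀` to `x`, with `α(1) ∈ V x α`. -/
def IsPathOpenCover (x₀ : X) (V : (x : X) → Path x₀ x → Set X) : Prop :=
  ∀ (x : X) (α : Path x₀ x), IsOpen (V x α) ∧ α 1 ∈ V x α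

/-- The path Spanier subgroup `π̃(𝒱, x₀)` determined by a path open cover `𝒱`: the subgroup
generated by all classes `[α * β * α⁻¹]` with `α` a path starting at `x₀` and `β` a loop at
`α(1)` lying in `V_α`. -/
noncomputable def pathSpanierSubgroup (x₀ : X) (V : (x : X) → Path x₀ x → Set X) :
    Subgroup (FundamentalGroup X x₀) :=
  Subgroup.closure
    {g | ∃ (x : X) (α : Path x₀ x) (β : Path x x), Set.range β ⊆ V x α ∧
      g = fgClass ((α.trans β).trans α.symm)}

/-- The collection of all path Spanier subgroups of `π₁(X, x₀)`. -/
def pathSpanierFamily (x₀ : X) : Set (Subgroup (FundamentalGroup X x₀)) :=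
  {H | ∃ V : (x : X) → Path x₀ x → Set X, IsPathOpenCover x₀ V ∧ H = pathSpanierSubgroup x₀ V}

/-!
A subgroup topology is a group topology as soon as every member `H` of the family contains,
for each `g`, the `g`-conjugate of some member `K`: if `b⁻¹ K b ⊆ H` then `(a K) (b H) ⊆ a b H`,
and if `a K a⁻¹ ⊆ H` then `(a K)⁻¹ ⊆ a⁻¹ H`. Path Spanier subgroups have this property because
conjugating by `[γ]` only reindexes the path open cover: it maps `π̃(𝒱', x₀)` into `π̃(𝒱, x₀)`,
where `𝒱'_α = 𝒱_{γ⁻¹ α}`.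
-/

section SubgroupTopology

variable {G : Type*} [Group G] {Sig : Set (Subgroup G)}

lemma isOpen_smul_of_mem_subgroupTopology {H : Subgroup G} (hH : H ∈ Sig) (g : G) :
    IsOpen[subgroupTopology Sig] (g • (H : Set G)) :=
  GenerateOpen.basic _ ⟨g, H, hH, rfl⟩

variable (hconj : ∀ g : G, ∀ H ∈ Sig, ∃ K ∈ Sig, ∀ k ∈ K, g * k * g⁻¹ ∈ H)
include hconj

lemma continuous_mul_subgroupTopology :
    letI := subgroupTopology Sig
    Continuous fun p : G × G => p.1 * p.2 := by
  let _ : TopologicalSpace G := subgroupTopology Sig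
  refine continuous_generateFrom_iff.mpr ?_
  rintro s ⟨g, H, hH, rfl⟩
  refine isOpen_iff_forall_mem_open.mpr ?_
  rintro ⟨a, b⟩ hab
  rw [Set.mem_preimage, mem_leftCoset_iff] at hab
  obtain ⟨K, hK, hKH⟩ := hconj b⁻¹ H hH
  refine ⟨(a • (K : Set G)) ×ˢ (b • (H : Set G)), ?_,
    (isOpen_smul_of_mem_subgroupTopology hK a).prod (isOpen_smul_of_mem_subgroupTopology hH b),
    mem_own_leftCoset K.toSubmonoid a, mem_own_leftCoset H.toSubmonoid b⟩
  rintro ⟨u, v⟩ ⟨hu, hv⟩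
  rw [mem_leftCoset_iff] at hu hv
  rw [Set.mem_preimage, mem_leftCoset_iff]
  -- `u * v = a * b * (b⁻¹ * k * b) * h` with `k ∈ K` and `h ∈ H`
  have hsplit : g⁻¹ * (u * v) = g⁻¹ * (a * b) * (b⁻¹ * (a⁻¹ * u) * b⁻¹⁻¹) * (b⁻¹ * v) := by
    group
  rw [hsplit]
  exact H.mul_mem (H.mul_mem hab (hKH _ hu)) hv

lemma continuous_inv_subgroupTopology :
    letI := subgroupTopology Sig
    Continuous fun a : G => a⁻¹ := by
  let _ : TopologicalSpace G := subgroupTopology Sig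
  refine continuous_generateFrom_iff.mpr ?_
  rintro s ⟨g, H, hH, rfl⟩
  refine isOpen_iff_forall_mem_open.mpr ?_
  intro a ha
  rw [Set.mem_preimage, mem_leftCoset_iff] at ha
  obtain ⟨K, hK, hKH⟩ := hconj a H hH
  refine ⟨a • (K : Set G), ?_, isOpen_smul_of_mem_subgroupTopology hK a,
    mem_own_leftCoset K.toSubmonoid a⟩
  intro u hu
  rw [mem_leftCoset_iff] at hu
  rw [Set.mem_preimage, mem_leftCoset_iff]
  have hsplit : g⁻¹ * u⁻¹ = g⁻¹ * a⁻¹ * (a * (a⁻¹ * u)⁻¹ * a⁻¹) := by group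
  rw [hsplit]
  exact H.mul_mem ha (hKH _ (K.inv_mem hu))

theorem isTopologicalGroup_subgroupTopology :
    @IsTopologicalGroup G (subgroupTopology Sig) _ :=
  letI := subgroupTopology Sig
  { toContinuousMul := ⟨continuous_mul_subgroupTopology hconj⟩
    toContinuousInv := ⟨continuous_inv_subgroupTopology hconj⟩ }

end SubgroupTopology

lemma fgClass_surjective (x₀ : X) : Function.Surjective (fgClass : Path x₀ x₀ → _) :=
  Path.Homotopic.Quotient.mk_surjective

open Path.Homotopic.Quotient in
lemma fgClass_conj {x₀ x : X} (γ : Path x₀ x₀) (α : Path x₀ x) (β : Path x x) :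
    fgClass γ * fgClass ((α.trans β).trans α.symm) * (fgClass γ)⁻¹ =
      fgClass (((γ.symm.trans α).trans β).trans (γ.symm.trans α).symm) := by
  rw [Path.trans_symm, Path.symm_symm]
  change (mk γ).symm.trans ((mk ((α.trans β).trans α.symm)).trans (mk γ)) =
    mk (((γ.symm.trans α).trans β).trans (α.symm.trans γ))
  simp only [mk_trans, mk_symm, trans_assoc]

lemma IsPathOpenCover.comp_trans {y x₀ : X} {V : (x : X) → Path y x → Set X}
    (hV : IsPathOpenCover y V) (δ : Path y x₀) :
    IsPathOpenCover x₀ fun x α => V x (δ.trans α) := fun x α => by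
  simpa only [Path.target] using hV x (δ.trans α)

lemma pathSpanierSubgroup_le_comap_conj {x₀ : X} (V : (x : X) → Path x₀ x → Set X)
    (γ : Path x₀ x₀) :
    pathSpanierSubgroup x₀ (fun x α => V x (γ.symm.trans α)) ≤
      (pathSpanierSubgroup x₀ V).comap (MulAut.conj (fgClass γ)).toMonoidHom := by
  refine (Subgroup.closure_le _).mpr ?_
  rintro _ ⟨x, α, β, hβ, rfl⟩
  refine Subgroup.subset_closure ⟨x, γ.symm.trans α, β, hβ, ?_⟩
  simpa only [MulEquiv.coe_toMonoidHom, MulAut.conj_apply] using fgClass_conj γ α β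

/-- the fundamental group with the path Spanier topology is a topological
group. -/
theorem statement16 (x₀ : X) :
    @IsTopologicalGroup (FundamentalGroup X x₀) (subgroupTopology (pathSpanierFamily x₀)) _ := by
  refine isTopologicalGroup_subgroupTopology ?_
  rintro g _ ⟨V, hV, rfl⟩
  obtain ⟨γ, rfl⟩ := fgClass_surjective x₀ g
  exact ⟨_, ⟨_, hV.comp_trans γ.symm, rfl⟩,
    fun k hk => pathSpanierSubgroup_le_comap_conj V γ hk⟩
end

section
/- Let X be a connected and locally path connected topological space with basepoint x₀. Then π₁^pSpan(X,x₀) (the fundamental group with the path Spanier topology) is discrete if and only if π₁^Span(X,x₀) (the fundamental group with the Spanier subgroup topology) is discrete. -/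
/-!
Both topologies are generated by the cosets of a directed family of subgroups, so each is discrete
exactly when its family contains the trivial subgroup. Every Spanier subgroup `π(𝒰, x₀)` contains
a path Spanier subgroup: take for `V_α` a member of `𝒰` containing `α(1)`. Conversely, if
`π̃(𝒱, x₀)` is trivial, then every loop in the path component of `V_α` containing `α(1)` is
null-homotopic, since conjugating it back to `α(1)` along a path inside `V_α` produces a generator
of `π̃(𝒱, x₀)`. By local path connectedness these path components are open, and together with the
path components not reached from `x₀` they form an open cover with trivial Spanier subgroup.
-/

open TopologicalSpace
open scoped Topology Pointwise

attribute [local instance] Path.Homotopic.setoid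

variable {X : Type*} [TopologicalSpace X]

section SubgroupTopology

variable {G : Type*} [Group G] {Sig : Set (Subgroup G)}

theorem smul_subgroup_eq_of_mem {H : Subgroup G} {g x : G} (hx : x ∈ g • (H : Set G)) :
    x • (H : Set G) = g • H := by
  obtain ⟨h, hh, rfl⟩ := hx
  dsimp only
  rw [smul_assoc, leftCoset_mem_leftCoset H hh]

theorem isTopologicalBasis_leftCosets (hSig : IsNbhdFamily Sig) :
    @IsTopologicalBasis G (subgroupTopology Sig) (leftCosets Sig) := by
  refine @IsTopologicalBasis.mk G (subgroupTopology Sig) _ ?_ ?_ rfl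
  · rintro _ ⟨g, H, hH, rfl⟩ _ ⟨g', K, hK, rfl⟩ x ⟨hxH, hxK⟩
    obtain ⟨S, hS, hSHK⟩ := hSig.2 H hH K hK
    refine ⟨x • (S : Set G), ⟨x, S, hS, rfl⟩, ⟨1, S.one_mem, mul_one x⟩, ?_⟩
    rw [← smul_subgroup_eq_of_mem hxH, ← smul_subgroup_eq_of_mem hxK, ← Set.smul_set_inter]
    exact Set.smul_set_mono hSHK
  · obtain ⟨H, hH⟩ := hSig.1
    exact Set.eq_univ_of_forall fun g => ⟨g • (H : Set G), ⟨g, H, hH, rfl⟩, 1, H.one_mem, mul_one g⟩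

theorem subgroupTopology_eq_bot_iff (hSig : IsNbhdFamily Sig) :
    subgroupTopology Sig = ⊥ ↔ ⊥ ∈ Sig := by
  constructor
  · intro h
    have h1 : ({1} : Set G) ∈ @nhds G (subgroupTopology Sig) 1 := by
      let _ : TopologicalSpace G := ⊥
      have : DiscreteTopology G := ⟨rfl⟩
      rw [h]; exact (isOpen_discrete _).mem_nhds rfl
    obtain ⟨_, ⟨g, H, hH, rfl⟩, -, hsub⟩ :=
      (@IsTopologicalBasis.mem_nhds_iff G (subgroupTopology Sig) _ _ _
        (isTopologicalBasis_leftCosets hSig)).1 h1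
    obtain rfl : g = 1 := hsub ⟨1, H.one_mem, mul_one g⟩
    convert hH
    exact ((Subgroup.eq_bot_iff_forall H).2 fun h hh => hsub ⟨h, hh, one_mul h⟩).symm
  · intro h
    refine eq_bot_of_singletons_open fun g => .basic _ ⟨g, ⊥, h, ?_⟩
    simp

end SubgroupTopology

theorem fgClass_eq_one_iff {x : X} (γ : Path x x) : fgClass γ = 1 ↔ γ.Homotopic (Path.refl x) :=
  Quotient.eq

theorem Path.Homotopic.conj_refl_iff {x y : X} (δ : Path x y) (β : Path y y) :
    ((δ.trans β).trans δ.symm).Homotopic (Path.refl x) ↔ β.Homotopic (Path.refl y) := by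
  have hconj : fgClass ((δ.trans β).trans δ.symm) =
      (FundamentalGroup.fundamentalGroupMulEquivOfPath δ).symm (fgClass β) :=
    Quotient.sound (Path.Homotopic.trans_assoc δ β δ.symm)
  rw [← fgClass_eq_one_iff, ← fgClass_eq_one_iff, hconj, MulEquiv.map_eq_one_iff]

theorem spanierSubgroup_mono {U U' : Set (Set X)} (x₀ : X) (h : ∀ u ∈ U', ∃ w ∈ U, u ⊆ w) :
    spanierSubgroup U' x₀ ≤ spanierSubgroup U x₀ := by
  refine Subgroup.closure_mono ?_
  rintro _ ⟨x, α, β, u, hu, hβ, rfl⟩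
  obtain ⟨w, hw, huw⟩ := h u hu
  exact ⟨x, α, β, w, hw, hβ.trans huw, rfl⟩

theorem pathSpanierSubgroup_mono {x₀ : X} {V V' : (x : X) → Path x₀ x → Set X}
    (h : ∀ x α, V' x α ⊆ V x α) : pathSpanierSubgroup x₀ V' ≤ pathSpanierSubgroup x₀ V := by
  refine Subgroup.closure_mono ?_
  rintro _ ⟨x, α, β, hβ, rfl⟩
  exact ⟨x, α, β, hβ.trans (h x α), rfl⟩

theorem IsOpenCover.inter {U₁ U₂ : Set (Set X)} (h₁ : IsOpenCover U₁) (h₂ : IsOpenCover U₂) :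
    IsOpenCover (Set.image2 (· ∩ ·) U₁ U₂) := by
  refine ⟨?_, Set.eq_univ_of_forall fun y => ?_⟩
  · rintro _ ⟨u₁, hu₁, u₂, hu₂, rfl⟩
    exact (h₁.1 u₁ hu₁).inter (h₂.1 u₂ hu₂)
  · obtain ⟨u₁, hu₁, hy₁⟩ := Set.mem_sUnion.1 (h₁.2 ▸ Set.mem_univ y)
    obtain ⟨u₂, hu₂, hy₂⟩ := Set.mem_sUnion.1 (h₂.2 ▸ Set.mem_univ y)
    exact ⟨u₁ ∩ u₂, Set.mem_image2_of_mem hu₁ hu₂, hy₁, hy₂⟩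

theorem isNbhdFamily_spanierFamily (x₀ : X) : IsNbhdFamily (spanierFamily x₀) := by
  refine ⟨⟨_, {Set.univ}, ⟨by simp, by simp⟩, rfl⟩, ?_⟩
  rintro _ ⟨U₁, hU₁, rfl⟩ _ ⟨U₂, hU₂, rfl⟩
  refine ⟨_, ⟨_, hU₁.inter hU₂, rfl⟩, le_inf ?_ ?_⟩ <;> refine spanierSubgroup_mono x₀ ?_
  · rintro _ ⟨u₁, hu₁, u₂, -, rfl⟩
    exact ⟨u₁, hu₁, Set.inter_subset_left⟩
  · rintro _ ⟨u₁, -, u₂, hu₂, rfl⟩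
    exact ⟨u₂, hu₂, Set.inter_subset_right⟩

theorem isNbhdFamily_pathSpanierFamily (x₀ : X) : IsNbhdFamily (pathSpanierFamily x₀) := by
  refine ⟨⟨_, fun _ _ => Set.univ, fun _ _ => ⟨isOpen_univ, trivial⟩, rfl⟩, ?_⟩
  rintro _ ⟨V₁, hV₁, rfl⟩ _ ⟨V₂, hV₂, rfl⟩
  refine ⟨_, ⟨fun x α => V₁ x α ∩ V₂ x α, fun x α => ?_, rfl⟩, le_inf ?_ ?_⟩
  · exact ⟨(hV₁ x α).1.inter (hV₂ x α).1, (hV₁ x α).2, (hV₂ x α).2⟩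
  · exact pathSpanierSubgroup_mono fun _ _ => Set.inter_subset_left
  · exact pathSpanierSubgroup_mono fun _ _ => Set.inter_subset_right

theorem exists_isPathOpenCover_pathSpanierSubgroup_le {U : Set (Set X)} (hU : IsOpenCover U)
    (x₀ : X) : ∃ V, IsPathOpenCover x₀ V ∧ pathSpanierSubgroup x₀ V ≤ spanierSubgroup U x₀ := by
  have hcov : ∀ (x : X) (α : Path x₀ x), ∃ u ∈ U, α 1 ∈ u := fun x α =>
    Set.mem_sUnion.1 (hU.2 ▸ Set.mem_univ (α 1))
  choose V hVU hαV using hcov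
  refine ⟨V, fun x α => ⟨hU.1 _ (hVU x α), hαV x α⟩, Subgroup.closure_mono ?_⟩
  rintro _ ⟨x, α, β, hβ, rfl⟩
  exact ⟨x, α, β, V x α, hVU x α, hβ, rfl⟩

theorem homotopic_refl_of_range_subset_pathComponentIn {x₀ x y : X}
    {V : (x : X) → Path x₀ x → Set X} (hV : pathSpanierSubgroup x₀ V = ⊥) (α : Path x₀ x)
    (β : Path y y) (hβ : Set.range β ⊆ pathComponentIn (V x α) x) :
    β.Homotopic (Path.refl y) := by
  obtain ⟨γ, hγ⟩ : y ∈ pathComponentIn (V x α) x := hβ ⟨0, β.source⟩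
  have hloop : Set.range ((γ.trans β).trans γ.symm) ⊆ V x α := by
    have hγV : Set.range γ ⊆ V x α := Set.range_subset_iff.2 hγ
    rw [Path.trans_range, Path.trans_range, Path.symm_range]
    exact Set.union_subset (Set.union_subset hγV (hβ.trans pathComponentIn_subset)) hγV
  have hgen : fgClass ((α.trans ((γ.trans β).trans γ.symm)).trans α.symm) = 1 := by
    rw [← Subgroup.mem_bot, ← hV]
    exact Subgroup.subset_closure ⟨x, α, _, hloop, rfl⟩
  rw [fgClass_eq_one_iff, Path.Homotopic.conj_refl_iff, Path.Homotopic.conj_refl_iff] at hgen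
  exact hgen

theorem exists_isOpenCover_spanierSubgroup_eq_bot [LocallyPathConnectedSpace X] {x₀ : X}
    {V : (x : X) → Path x₀ x → Set X} (hV : IsPathOpenCover x₀ V)
    (hbot : pathSpanierSubgroup x₀ V = ⊥) :
    ∃ U : Set (Set X), IsOpenCover U ∧ spanierSubgroup U x₀ = ⊥ := by
  let U : Set (Set X) := {u | IsOpen u ∧
    ∀ y, Joined x₀ y → ∀ β : Path y y, Set.range β ⊆ u → β.Homotopic (Path.refl y)}
  refine ⟨U, ⟨fun u hu => hu.1, Set.eq_univ_of_forall fun y => ?_⟩, ?_⟩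
  · by_cases hy : Joined x₀ y
    · refine ⟨pathComponentIn (V y hy.somePath) y, ⟨(hV y _).1.pathComponentIn y, ?_⟩,
        mem_pathComponentIn_self (by simpa using (hV y hy.somePath).2)⟩
      exact fun z _ β hβ => homotopic_refl_of_range_subset_pathComponentIn hbot _ β hβ
    · refine ⟨pathComponent y, ⟨.pathComponent y, fun z hz β hβ => ?_⟩, mem_pathComponent_self y⟩
      have hzy : Joined z y := (hβ ⟨0, β.source⟩ : z ∈ pathComponent y).symm
      exact absurd (hz.trans hzy) hy
  · refine le_bot_iff.1 ((Subgroup.closure_le _).2 ?_)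
    rintro _ ⟨y, δ, β, u, hu, hβ, rfl⟩
    exact (fgClass_eq_one_iff _).2 ((Path.Homotopic.conj_refl_iff δ β).2 (hu.2 y ⟨δ⟩ β hβ))

theorem statement18_general [LocallyPathConnectedSpace X] (x₀ : X) :
    subgroupTopology (pathSpanierFamily x₀) = ⊥ ↔
      subgroupTopology (spanierFamily x₀) = ⊥ := by
  rw [subgroupTopology_eq_bot_iff (isNbhdFamily_pathSpanierFamily x₀),
    subgroupTopology_eq_bot_iff (isNbhdFamily_spanierFamily x₀)]
  constructor
  · rintro ⟨V, hV, hbot⟩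
    obtain ⟨U, hU, hUbot⟩ := exists_isOpenCover_spanierSubgroup_eq_bot hV hbot.symm
    exact ⟨U, hU, hUbot.symm⟩
  · rintro ⟨U, hU, hbot⟩
    obtain ⟨V, hV, hle⟩ := exists_isPathOpenCover_pathSpanierSubgroup_le hU x₀
    exact ⟨V, hV, (le_bot_iff.1 (hbot ▸ hle)).symm⟩

/-- for a connected, locally path connected space, the path Spanier topology on
`π₁(X, x₀)` is discrete iff the Spanier subgroup topology is discrete. -/
theorem statement18 [ConnectedSpace X] [LocallyPathConnectedSpace X] (x₀ : X) :
    subgroupTopology (pathSpanierFamily x₀) = ⊥ ↔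
      subgroupTopology (spanierFamily x₀) = ⊥ :=
  statement18_general x₀
end
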